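/- arXiv:1509.02086 — 2 statements merged into one kernel-verified Lean document; each statement's English description precedes it below -/
import Mathlib

section
/- Let Ṽ : ℝ≥0^ν → ℝ≥0 be locally Lipschitz and suppose that for every admissible kinetics R ∈ K_A and every x in the open positive orthant of ℝⁿ, the Dini derivative of Ṽ ∘ R along the vector field x ↦ ΓR(x) is nonpositive, i.e. limsup_{h→0⁺} (Ṽ(R(x + hΓR(x))) − Ṽ(R(x)))/h ≤ 0. Then for every ℓ ∈ {1,…,s} and every strictly positive r ∈ ℝ^ν at which Ṽ is differentiable, ∇Ṽ(r)ᵀ (Γ^ℓ r) ≤ 0; that is, Ṽ is a common Lyapunov function for each of the linear systems ṙ = Γ^ℓ r. -/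
open Filter Set Topology

/-- Partial derivative ∂R_j/∂x_i at x. -/
noncomputable def pd {n ν : ℕ} (R : (Fin n → ℝ) → Fin ν → ℝ)
    (x : Fin n → ℝ) (j : Fin ν) (i : Fin n) : ℝ :=
  fderiv ℝ (fun y => R y j) x (Pi.single i 1)

/-- Admissible kinetics (A1)-(A4) for a reactant matrix `A`. -/
structure IsAdmissible {n ν : ℕ} (A : Matrix (Fin n) (Fin ν) ℕ)
    (R : (Fin n → ℝ) → Fin ν → ℝ) : Prop where
  smooth : ContDiff ℝ 1 R
  nonneg : ∀ x, (∀ i, 0 ≤ x i) → ∀ j, 0 ≤ R x j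
  vanish : ∀ x, (∀ i, 0 ≤ x i) → ∀ i j, 0 < A i j → x i = 0 → R x j = 0
  deriv_nonneg : ∀ x, (∀ i, 0 ≤ x i) → ∀ i j, 0 < A i j → 0 ≤ pd R x j i
  deriv_zero : ∀ x, (∀ i, 0 ≤ x i) → ∀ i j, A i j = 0 → pd R x j i = 0
  deriv_pos : ∀ x, (∀ i, 0 < x i) → ∀ i j, 0 < A i j → 0 < pd R x j i

/-- Upper (right) Dini derivative of `V` along the vector field `f` at `x`,
`D⁺V(x) = limsup_{h→0⁺} (V(x + h f(x)) − V(x))/h`. -/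
noncomputable def dini {m : ℕ} (V : (Fin m → ℝ) → ℝ)
    (f : (Fin m → ℝ) → (Fin m → ℝ)) (x : Fin m → ℝ) : ℝ :=
  Filter.limsup (fun h : ℝ => (V (x + h • f x) - V x) / h) (nhdsWithin 0 (Set.Ioi 0))

/-- The rank-one matrix `Γ^ℓ = e_j γ_iᵀ ∈ ℝ^{ν×ν}`. -/
noncomputable def GammaEll {n ν : ℕ} (Γ : Matrix (Fin n) (Fin ν) ℝ) (i : Fin n) (j : Fin ν) :
    Matrix (Fin ν) (Fin ν) ℝ :=
  Matrix.vecMulVec (Pi.single j 1) (fun k => Γ i k)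

/-!
Test the hypothesis on mass-action kinetics `R_k(x) = r_k ∏_m x_m ^ κ_{mk}`, which is admissible
whenever the exponent matrix `κ` has the same support as `A`. At `x = 1` we have `R(1) = r`, and
the derivative of `R` at `1` in the direction `v = Γ r` is `r ⊙ κᵀ v`. Raising the exponent
`κ_{ij}` from `A_{ij}` to `A_{ij} + N` adds `N r_j v_i e_j` to it, so the Dini hypothesis gives
`c + N r_j v_i ∇Ṽ(r) e_j ≤ 0` for every `N`, with `c` independent of `N`. Hence
`v_i ∇Ṽ(r) e_j ≤ 0`, while `Γ^ℓ r = v_i e_j`.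
-/

theorem add_single_apply_eq_zero_iff {ι σ : Type*} [DecidableEq ι] [DecidableEq σ]
    {κ : Matrix ι σ ℕ} {i : ι} {j : σ} (hκ : 0 < κ i j) (N : ℕ) (m : ι) (k : σ) :
    (κ + Matrix.single i j N) m k = 0 ↔ κ m k = 0 := by
  simp only [Matrix.add_apply, Matrix.single_apply]
  split_ifs with h
  · obtain ⟨rfl, rfl⟩ := h
    omega
  · rw [add_zero]

theorem nonpos_of_forall_add_nat_mul_nonpos {a b : ℝ} (h : ∀ N : ℕ, a + N * b ≤ 0) : b ≤ 0 := by
  by_contra! hb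
  obtain ⟨N, hN⟩ := exists_nat_gt (-a / b)
  have := h N
  rw [div_lt_iff₀ hb] at hN
  linarith

section MassAction

open Finset

variable {ι σ : Type*} [Fintype ι]

noncomputable def massAction (κ : Matrix ι σ ℕ) (r : σ → ℝ) (x : ι → ℝ) (k : σ) : ℝ :=
  r k * ∏ m, x m ^ κ m k

theorem massAction_one (κ : Matrix ι σ ℕ) (r : σ → ℝ) : massAction κ r 1 = r := by
  ext k; simp [massAction]

variable [DecidableEq ι]

noncomputable def massActionDeriv (κ : Matrix ι σ ℕ) (r : σ → ℝ) (x : ι → ℝ) :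
    (ι → ℝ) →L[ℝ] σ → ℝ :=
  ContinuousLinearMap.pi fun k => r k • ∑ m, (∏ m' ∈ univ.erase m, x m' ^ κ m' k) •
    ((κ m k * x m ^ (κ m k - 1) : ℝ) • ContinuousLinearMap.proj m)

theorem massActionDeriv_apply (κ : Matrix ι σ ℕ) (r : σ → ℝ) (x v : ι → ℝ) (k : σ) :
    massActionDeriv κ r x v k =
      r k * ∑ m, (∏ m' ∈ univ.erase m, x m' ^ κ m' k) * (κ m k * x m ^ (κ m k - 1)) * v m := by
  simp [massActionDeriv, mul_assoc]

theorem hasFDerivAt_massAction (κ : Matrix ι σ ℕ) (r : σ → ℝ) (x : ι → ℝ) :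
    HasFDerivAt (massAction κ r) (massActionDeriv κ r x) x := by
  refine hasFDerivAt_pi.2 fun k => (HasFDerivAt.finsetProd fun m _ => ?_).const_mul (r k)
  simpa using (hasFDerivAt_apply (𝕜 := ℝ) m x).pow (κ m k)

theorem massActionDeriv_one_apply (κ : Matrix ι σ ℕ) (r : σ → ℝ) (v : ι → ℝ) (k : σ) :
    massActionDeriv κ r 1 v k = r k * ∑ m, κ m k * v m := by
  simp [massActionDeriv_apply]

theorem massActionDeriv_one_add_single [DecidableEq σ] (κ : Matrix ι σ ℕ) (r : σ → ℝ) (i : ι)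
    (j : σ) (N : ℕ) (v : ι → ℝ) :
    massActionDeriv (κ + Matrix.single i j N) r 1 v =
      massActionDeriv κ r 1 v + (N * (r j * v i)) • Pi.single j 1 := by
  ext k
  by_cases hk : k = j
  · subst hk
    simp only [massActionDeriv_one_apply, Matrix.add_apply, Matrix.single_apply, and_true,
      Nat.cast_add, Nat.cast_ite, CharP.cast_eq_zero, add_mul, ite_mul, zero_mul,
      sum_add_distrib, sum_ite_eq, Finset.mem_univ, ↓reduceIte, Pi.add_apply,
      Pi.smul_apply, Pi.single_eq_same, smul_eq_mul, mul_one]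
    ring
  · simp [massActionDeriv_one_apply, hk, Ne.symm hk]

end MassAction

section Admissibility

open Finset

variable {n ν : ℕ}

theorem pd_massAction (κ : Matrix (Fin n) (Fin ν) ℕ) (r : Fin ν → ℝ) (x : Fin n → ℝ)
    (k : Fin ν) (m : Fin n) :
    pd (massAction κ r) x k m =
      r k * ((∏ m' ∈ univ.erase m, x m' ^ κ m' k) * (κ m k * x m ^ (κ m k - 1))) := by
  rw [pd, (hasFDerivAt_pi'.1 (hasFDerivAt_massAction κ r x) k).fderiv]
  simp [massActionDeriv_apply, Pi.single_apply]

theorem isAdmissible_massAction {A κ : Matrix (Fin n) (Fin ν) ℕ}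
    (hκ : ∀ m k, κ m k = 0 ↔ A m k = 0) {r : Fin ν → ℝ} (hr : ∀ k, 0 < r k) :
    IsAdmissible A (massAction κ r) where
  smooth := contDiff_pi.2 fun k =>
    contDiff_const.mul (contDiff_prod fun m _ => (contDiff_apply ℝ ℝ m).pow _)
  nonneg x hx k := mul_nonneg (hr k).le (prod_nonneg fun m _ => pow_nonneg (hx m) _)
  vanish x _ m k hA hxm := by
    have hκm : κ m k ≠ 0 := fun h => hA.ne' ((hκ m k).1 h)
    rw [massAction, prod_eq_zero (mem_univ m) (by rw [hxm, zero_pow hκm]), mul_zero]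
  deriv_nonneg x hx m k _ := by
    rw [pd_massAction]
    exact mul_nonneg (hr k).le (mul_nonneg (prod_nonneg fun m' _ => pow_nonneg (hx m') _)
      (mul_nonneg (Nat.cast_nonneg _) (pow_nonneg (hx m) _)))
  deriv_zero x _ m k hA := by
    rw [pd_massAction, (hκ m k).2 hA]
    simp
  deriv_pos x hx m k hA := by
    have hκm : 0 < κ m k := Nat.pos_of_ne_zero fun h => hA.ne' ((hκ m k).1 h)
    rw [pd_massAction]
    exact mul_pos (hr k) (mul_pos (prod_pos fun m' _ => pow_pos (hx m') _)
      (mul_pos (Nat.cast_pos.2 hκm) (pow_pos (hx m) _)))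

end Admissibility

theorem dini_eq_of_hasFDerivAt {m : ℕ} {V : (Fin m → ℝ) → ℝ} {V' : (Fin m → ℝ) →L[ℝ] ℝ}
    {x : Fin m → ℝ} (hV : HasFDerivAt V V' x) (f : (Fin m → ℝ) → (Fin m → ℝ)) :
    dini V f x = V' (f x) := by
  have hline : HasDerivAt (fun h : ℝ => x + h • f x) (f x) 0 := by
    simpa using ((hasDerivAt_id (0 : ℝ)).smul_const (f x)).const_add x
  have hV0 : HasFDerivAt V V' (x + (0 : ℝ) • f x) := by simpa using hV
  refine Tendsto.limsup_eq ((hV0.comp_hasDerivAt 0 hline).tendsto_slope_zero_right.congr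
    fun h => ?_)
  simp [div_eq_inv_mul]

theorem GammaEll_mulVec {n ν : ℕ} (Γ : Matrix (Fin n) (Fin ν) ℝ) (i : Fin n) (j : Fin ν)
    (r : Fin ν → ℝ) : (GammaEll Γ i j).mulVec r = Γ.mulVec r i • Pi.single j 1 := by
  ext k
  simp only [GammaEll, Matrix.mulVec, Matrix.vecMulVec_apply, dotProduct, Pi.smul_apply,
    smul_eq_mul, Finset.sum_mul]
  exact Finset.sum_congr rfl fun _ _ => by ring

theorem dini_massAction_one {n ν : ℕ} (Vt : (Fin ν → ℝ) → ℝ) (Γ : Matrix (Fin n) (Fin ν) ℝ)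
    (κ : Matrix (Fin n) (Fin ν) ℕ) {r : Fin ν → ℝ} (hV : DifferentiableAt ℝ Vt r) :
    dini (fun y => Vt (massAction κ r y)) (fun y => Γ.mulVec (massAction κ r y)) 1 =
      fderiv ℝ Vt r (massActionDeriv κ r 1 (Γ.mulVec r)) := by
  have hV1 : HasFDerivAt Vt (fderiv ℝ Vt r) (massAction κ r 1) :=
    (massAction_one κ r).symm ▸ hV.hasFDerivAt
  have hVR : HasFDerivAt (fun y => Vt (massAction κ r y))
      ((fderiv ℝ Vt r).comp (massActionDeriv κ r 1)) 1 :=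
    hV1.comp 1 (hasFDerivAt_massAction κ r 1)
  rw [dini_eq_of_hasFDerivAt hVR, ContinuousLinearMap.comp_apply, massAction_one]

theorem stmt2_general {n ν : ℕ} (A : Matrix (Fin n) (Fin ν) ℕ)
    (Γ : Matrix (Fin n) (Fin ν) ℝ)
    (Vt : (Fin ν → ℝ) → ℝ)
    (hdini : ∀ R, IsAdmissible A R → ∀ x : Fin n → ℝ, (∀ i, 0 < x i) →
        dini (fun y => Vt (R y)) (fun y => Γ.mulVec (R y)) x ≤ 0) :
    ∀ i j, 0 < A i j → ∀ r : Fin ν → ℝ, (∀ k, 0 < r k) →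
      DifferentiableAt ℝ Vt r →
      fderiv ℝ Vt r ((GammaEll Γ i j).mulVec r) ≤ 0 := by
  intro i j hA r hr hV
  set L := fderiv ℝ Vt r
  set v := Γ.mulVec r
  have hraised : ∀ N : ℕ,
      L (massActionDeriv A r 1 v) + N * (r j * v i * L (Pi.single j 1)) ≤ 0 := by
    intro N
    have hR := hdini _ (isAdmissible_massAction (add_single_apply_eq_zero_iff hA N) hr) 1
      fun _ => one_pos
    rw [dini_massAction_one Vt Γ _ hV, massActionDeriv_one_add_single, map_add, map_smul,
      smul_eq_mul] at hR
    linarith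
  rw [GammaEll_mulVec, map_smul, smul_eq_mul]
  exact nonpos_of_mul_nonpos_right (by simpa only [mul_assoc] using
    nonpos_of_forall_add_nat_mul_nonpos hraised) (hr j)

/-- Theorem 3.1 (converse direction): if `Ṽ ∘ R` has nonpositive Dini derivative along
`ΓR` for every admissible kinetics, then `Ṽ` is a common Lyapunov function for the
linear systems `ṙ = Γ^ℓ r`. -/
theorem stmt2 {n ν : ℕ} (A B : Matrix (Fin n) (Fin ν) ℕ)
    (Γ : Matrix (Fin n) (Fin ν) ℝ)
    (hΓ : ∀ i j, Γ i j = (B i j : ℝ) - (A i j : ℝ))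
    (Vt : (Fin ν → ℝ) → ℝ) (hLip : LocallyLipschitz Vt)
    (hVnn : ∀ r : Fin ν → ℝ, (∀ j, 0 ≤ r j) → 0 ≤ Vt r)
    (hdini : ∀ R, IsAdmissible A R → ∀ x : Fin n → ℝ, (∀ i, 0 < x i) →
        dini (fun y => Vt (R y)) (fun y => Γ.mulVec (R y)) x ≤ 0) :
    ∀ i j, 0 < A i j → ∀ r : Fin ν → ℝ, (∀ k, 0 < r k) →
      DifferentiableAt ℝ Vt r →
      fderiv ℝ Vt r ((GammaEll Γ i j).mulVec r) ≤ 0 :=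
  stmt2_general A Γ Vt hdini
end

section
/- Consider a chemical reaction network with matrices A, B ∈ ℤ≥0^{n×ν}, Γ = B − A, such that ker Γ contains a strictly positive vector (assumption AG). Suppose the network has a critical deadlock: a nonempty set P of species such that every reaction j has a reactant in P (for every j there exists i ∈ P with α_{ij} > 0), and P does not contain the support of any nonzero nonnegative λ ∈ ℝⁿ with λᵀΓ = 0. Then the network admits no convex piecewise-linear-in-rates robust Lyapunov function: there exists no matrix C ∈ ℝ^{q×ν} with ker C = ker Γ such that for every admissible kinetics R ∈ K_A and every x ∈ ℝ≥0ⁿ, the upper Dini derivative of x ↦ ‖C R(x)‖_∞ along the vector field x ↦ ΓR(x) is nonpositive. -/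
/-!
Criticality of the deadlock `P` gives, by Gordan's alternative, a flux `v` with `(Γ v)_i > 0`
on `P`; adding a small multiple of `v` to a positive vector of `ker Γ` yields positive rates `r`
whose reaction vector `d = Γ r` is still positive on `P`. Since every reaction `j` has a reactant
`σ j ∈ P`, the rate `r_j ∏_{α_ij > 0} x_i · exp (a_j (x_{σ j} - 1))` is admissible for any
`a_j ≥ 0`, and the `a_j` can be tuned so that at `x = 1` the derivative of `R` along `d` is
`c • r` with `c > 0`. Then `‖C R x‖` grows at rate `c ‖C r‖` at `x = 1`, and `C r ≠ 0` because
`Γ r ≠ 0` and `ker C = ker Γ`.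
-/

open Filter Set Topology

open Matrix

theorem exists_mulVec_pos_of_not_exists_vecMul_eq_zero {m ν : Type*} [Fintype m] [Fintype ν]
    (Γ : Matrix m ν ℝ) (P : Finset m)
    (h : ¬ ∃ lam : m → ℝ, (∀ i, 0 ≤ lam i) ∧ lam ≠ 0 ∧
        (∀ i, lam i ≠ 0 → i ∈ P) ∧ lam ᵥ* Γ = 0) :
    ∃ v : ν → ℝ, ∀ i ∈ P, 0 < (Γ *ᵥ v) i := by
  classical
  set Δ := stdSimplex ℝ m ∩ Set.pi (↑P)ᶜ (fun _ => {0})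
  have hΔ : Convex ℝ Δ := (convex_stdSimplex ℝ m).inter (convex_pi fun _ _ => convex_singleton 0)
  have hK : IsCompact ((· ᵥ* Γ) '' Δ) :=
    ((isCompact_stdSimplex ℝ m).inter_right (isClosed_set_pi fun _ _ => isClosed_singleton)).image
      (by fun_prop)
  have h0 : (0 : ν → ℝ) ∉ (· ᵥ* Γ) '' Δ := by
    rintro ⟨lam, ⟨⟨hnonneg, hsum⟩, hsupp⟩, hlam⟩
    refine h ⟨lam, hnonneg, ?_, fun i hi => ?_, hlam⟩
    · rintro rfl
      simp at hsum
    · by_contra hiP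
      exact hi (hsupp i hiP)
  obtain ⟨f, u, hf0, hfK⟩ := geometric_hahn_banach_point_closed
    (hΔ.linear_image Γ.vecMulLinear) hK.isClosed h0
  refine ⟨fun k => f (Pi.single k 1), fun i hi => ?_⟩
  have hrow : Γ i ∈ (· ᵥ* Γ) '' Δ := by
    refine ⟨Pi.single i 1, ⟨single_mem_stdSimplex ℝ i, fun k hk => ?_⟩, single_one_vecMul i Γ⟩
    simp [show k ≠ i by rintro rfl; exact hk hi]
  have hfrow : f (Γ i) = (Γ *ᵥ fun k => f (Pi.single k 1)) i := by
    conv_lhs => rw [pi_eq_sum_univ' (Γ i)]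
    simp [mulVec, dotProduct]
  linarith [hfK _ hrow, hf0, map_zero f]

theorem exists_pos_mulVec_pos {m ν : Type*} [Fintype ν] {Γ : Matrix m ν ℝ} {P : Finset m}
    (hker : ∃ v₀ : ν → ℝ, (∀ j, 0 < v₀ j) ∧ Γ *ᵥ v₀ = 0) {v : ν → ℝ}
    (hv : ∀ i ∈ P, 0 < (Γ *ᵥ v) i) :
    ∃ r : ν → ℝ, (∀ j, 0 < r j) ∧ ∀ i ∈ P, 0 < (Γ *ᵥ r) i := by
  obtain ⟨v₀, hv₀, hΓv₀⟩ := hker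
  have hsmall : ∀ᶠ t in 𝓝[>] (0 : ℝ), 0 < t ∧ ∀ j, 0 < v₀ j + t * v j := by
    refine eventually_mem_nhdsWithin.and (nhdsWithin_le_nhds (eventually_all.2 fun j => ?_))
    have hcont : Continuous fun t : ℝ => v₀ j + t * v j := by fun_prop
    exact hcont.tendsto 0 |>.eventually (eventually_gt_nhds (by simpa using hv₀ j))
  obtain ⟨t, ht, hpos⟩ := hsmall.exists
  refine ⟨v₀ + t • v, hpos, fun i hi => ?_⟩
  simpa [mulVec_add, mulVec_smul, hΓv₀] using mul_pos ht (hv i hi)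

noncomputable def expMassAction {ι : Type*} (S : Finset ι) (k : ι) (a : ℝ) (y : ι → ℝ) : ℝ :=
  (∏ i ∈ S, y i) * Real.exp (a * (y k - 1))

section expMassAction

variable {ι : Type*} [Fintype ι]

theorem contDiff_expMassAction (S : Finset ι) (k : ι) (a : ℝ) {N : WithTop ℕ∞} :
    ContDiff ℝ N (expMassAction S k a) := by
  unfold expMassAction
  fun_prop

theorem fderiv_expMassAction_apply [DecidableEq ι] (S : Finset ι) (k : ι) (a : ℝ)
    (y w : ι → ℝ) :
    fderiv ℝ (expMassAction S k a) y w = Real.exp (a * (y k - 1)) *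
      (a * (∏ i ∈ S, y i) * w k + ∑ i ∈ S, (∏ j ∈ S.erase i, y j) * w i) := by
  have hprod := HasFDerivAt.finsetProd (u := S) (g := fun i (y : ι → ℝ) => y i) (x := y)
    fun i _ => hasFDerivAt_apply (𝕜 := ℝ) i y
  have hexp := (((hasFDerivAt_apply k y).sub_const 1).const_mul a).exp
  unfold expMassAction
  rw [(hprod.fun_mul hexp).fderiv]
  simp
  ring

theorem fderiv_expMassAction_single [DecidableEq ι] (S : Finset ι) (k : ι) (a : ℝ)
    (y : ι → ℝ) (i : ι) :
    fderiv ℝ (expMassAction S k a) y (Pi.single i 1) = Real.exp (a * (y k - 1)) *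
      (a * (∏ l ∈ S, y l) * (if k = i then 1 else 0) +
        if i ∈ S then ∏ j ∈ S.erase i, y j else 0) := by
  simp [fderiv_expMassAction_apply, Pi.single_apply]

theorem fderiv_expMassAction_single_nonneg [DecidableEq ι] (S : Finset ι) (k : ι) {a : ℝ}
    (ha : 0 ≤ a) {y : ι → ℝ} (hy : ∀ i, 0 ≤ y i) (i : ι) :
    0 ≤ fderiv ℝ (expMassAction S k a) y (Pi.single i 1) := by
  rw [fderiv_expMassAction_single]
  have := Finset.prod_nonneg fun l (_ : l ∈ S) => hy l
  have := Finset.prod_nonneg fun l (_ : l ∈ S.erase i) => hy l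
  split_ifs <;> positivity

theorem fderiv_expMassAction_single_eq_zero [DecidableEq ι] {S : Finset ι} {k : ι} (hk : k ∈ S)
    (a : ℝ) (y : ι → ℝ) {i : ι} (hi : i ∉ S) :
    fderiv ℝ (expMassAction S k a) y (Pi.single i 1) = 0 := by
  rw [fderiv_expMassAction_single, if_neg (ne_of_mem_of_not_mem hk hi), if_neg hi]
  ring

theorem fderiv_expMassAction_single_pos [DecidableEq ι] (S : Finset ι) (k : ι) {a : ℝ}
    (ha : 0 ≤ a) {y : ι → ℝ} (hy : ∀ i, 0 < y i) {i : ι} (hi : i ∈ S) :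
    0 < fderiv ℝ (expMassAction S k a) y (Pi.single i 1) := by
  rw [fderiv_expMassAction_single, if_pos hi]
  have := Finset.prod_pos fun l (_ : l ∈ S) => hy l
  have := Finset.prod_pos fun l (_ : l ∈ S.erase i) => hy l
  split_ifs <;> positivity

theorem hasDerivAt_expMassAction_one_add_smul (S : Finset ι) (k : ι) (a : ℝ) (d : ι → ℝ) :
    HasDerivAt (fun h : ℝ => expMassAction S k a (1 + h • d)) (a * d k + ∑ i ∈ S, d i) 0 := by
  classical
  have hline : HasDerivAt (fun h : ℝ => 1 + h • d) d 0 := by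
    simpa using ((hasDerivAt_id (0 : ℝ)).smul_const d).const_add 1
  have hE := ((contDiff_expMassAction S k a (N := 1)).differentiable one_ne_zero
    (1 + (0 : ℝ) • d)).hasFDerivAt.comp_hasDerivAt (0 : ℝ) hline
  refine hE.congr_deriv ?_
  simp [fderiv_expMassAction_apply]

end expMassAction

def reactants {n ν : ℕ} (A : Matrix (Fin n) (Fin ν) ℕ) (j : Fin ν) : Finset (Fin n) :=
  {i | 0 < A i j}

@[simp]
theorem mem_reactants {n ν : ℕ} {A : Matrix (Fin n) (Fin ν) ℕ} {i : Fin n} {j : Fin ν} :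
    i ∈ reactants A j ↔ 0 < A i j := by
  simp [reactants]

theorem isAdmissible_expMassAction {n ν : ℕ} {A : Matrix (Fin n) (Fin ν) ℕ} {r : Fin ν → ℝ}
    (hr : ∀ j, 0 < r j) {σ : Fin ν → Fin n} (hσ : ∀ j, 0 < A (σ j) j) {a : Fin ν → ℝ}
    (ha : ∀ j, 0 ≤ a j) :
    IsAdmissible A fun y j => r j * expMassAction (reactants A j) (σ j) (a j) y := by
  have hpd : ∀ x j i, pd (fun y j => r j * expMassAction (reactants A j) (σ j) (a j) y) x j i =
      r j * fderiv ℝ (expMassAction (reactants A j) (σ j) (a j)) x (Pi.single i 1) := by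
    intro x j i
    rw [pd, fderiv_const_mul ((contDiff_expMassAction _ _ _ (N := 1)).differentiable one_ne_zero x)]
    rfl
  refine ⟨contDiff_pi.2 fun j => contDiff_const.mul (contDiff_expMassAction _ _ _),
    fun x hx j => ?_, fun x hx i j hij hxi => ?_, fun x hx i j _ => ?_, fun x hx i j hij => ?_,
    fun x hx i j hij => ?_⟩
  · have := Finset.prod_nonneg fun l (_ : l ∈ reactants A j) => hx l
    have := hr j
    unfold expMassAction
    positivity
  · rw [expMassAction, Finset.prod_eq_zero (mem_reactants.2 hij) hxi, zero_mul, mul_zero]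
  · rw [hpd]
    exact mul_nonneg (hr j).le (fderiv_expMassAction_single_nonneg _ _ (ha j) hx i)
  · rw [hpd, fderiv_expMassAction_single_eq_zero (mem_reactants.2 (hσ j)) _ x (by simpa using hij),
      mul_zero]
  · rw [hpd]
    exact mul_pos (hr j) (fderiv_expMassAction_single_pos _ _ (ha j) hx (mem_reactants.2 hij))

theorem exists_isAdmissible_hasDerivAt_smul {n ν : ℕ} {A : Matrix (Fin n) (Fin ν) ℕ}
    {P : Finset (Fin n)} (hdeadlock : ∀ j, ∃ i ∈ P, 0 < A i j) {r : Fin ν → ℝ}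
    (hr : ∀ j, 0 < r j) {d : Fin n → ℝ} (hd : ∀ i ∈ P, 0 < d i) :
    ∃ R, IsAdmissible A R ∧ R 1 = r ∧
      ∃ c : ℝ, 0 < c ∧ HasDerivAt (fun h : ℝ => R (1 + h • d)) (c • r) 0 := by
  choose σ hσP hσA using hdeadlock
  set s : Fin ν → ℝ := fun j => ∑ i ∈ reactants A j, d i
  obtain ⟨M, hM⟩ := (Set.finite_range s).bddAbove
  have hsM : ∀ j, s j ≤ max M 1 := fun j => (hM ⟨j, rfl⟩).trans (le_max_left _ _)
  -- chosen so that `a j * d (σ j) + s j = max M 1` for every `j`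
  set a : Fin ν → ℝ := fun j => (max M 1 - s j) / d (σ j)
  have ha : ∀ j, 0 ≤ a j := fun j => div_nonneg (sub_nonneg.2 (hsM j)) (hd _ (hσP j)).le
  refine ⟨_, isAdmissible_expMassAction hr hσA ha, by simp [expMassAction], max M 1,
    by positivity, hasDerivAt_pi.2 fun j => ?_⟩
  refine ((hasDerivAt_expMassAction_one_add_smul _ (σ j) (a j) d).const_mul (r j)).congr_deriv ?_
  have := (hd _ (hσP j)).ne'
  simp only [Pi.smul_apply, smul_eq_mul, a, s]
  field_simp
  ring

theorem tendsto_norm_slope_of_hasDerivAt_smul {E : Type*} [NormedAddCommGroup E]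
    [NormedSpace ℝ E] {γ : ℝ → E} {c : ℝ} (hc : 0 ≤ c) (hγ : HasDerivAt γ (c • γ 0) 0) :
    Tendsto (fun h => (‖γ h‖ - ‖γ 0‖) / h) (𝓝[>] 0) (𝓝 (c * ‖γ 0‖)) := by
  have hslope : Tendsto (fun h => ‖slope γ 0 h - c • γ 0‖) (𝓝[>] 0) (𝓝 0) := by
    refine tendsto_iff_norm_sub_tendsto_zero.1 ?_
    exact (hasDerivAt_iff_tendsto_slope.1 hγ).mono_left (nhdsWithin_mono 0 fun h hh => ne_of_gt hh)
  refine tendsto_iff_norm_sub_tendsto_zero.2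
    (squeeze_zero' (.of_forall fun _ => norm_nonneg _) ?_ hslope)
  filter_upwards [self_mem_nhdsWithin] with h (hh : 0 < h)
  -- compare `γ h` with `(1 + h c) • γ 0`, whose norm is exactly `(1 + h c) ‖γ 0‖` as `c ≥ 0`
  have hnorm : ‖(1 + h * c) • γ 0‖ = (1 + h * c) * ‖γ 0‖ := by
    rw [norm_smul, Real.norm_of_nonneg (by positivity)]
  have hdiff : slope γ 0 h - c • γ 0 = h⁻¹ • (γ h - (1 + h * c) • γ 0) := by
    rw [slope_def_module, sub_zero, add_smul, one_smul, smul_sub, smul_sub, smul_add, smul_smul,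
      ← mul_assoc, inv_mul_cancel₀ hh.ne', one_mul]
    abel
  calc ‖(‖γ h‖ - ‖γ 0‖) / h - c * ‖γ 0‖‖ = |‖γ h‖ - ‖(1 + h * c) • γ 0‖| / h := by
        rw [hnorm, Real.norm_eq_abs, ← abs_of_pos hh, ← abs_div, abs_of_pos hh]
        congr 1
        field_simp
        ring
    _ ≤ ‖γ h - (1 + h * c) • γ 0‖ / h := by gcongr; exact abs_norm_sub_norm_le _ _
    _ = ‖slope γ 0 h - c • γ 0‖ := by
        rw [hdiff, norm_smul, norm_inv, Real.norm_of_nonneg hh.le, inv_mul_eq_div]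

theorem dini_norm_eq_of_hasDerivAt_smul {m : ℕ} {E : Type*} [NormedAddCommGroup E]
    [NormedSpace ℝ E] {F : (Fin m → ℝ) → E} {f : (Fin m → ℝ) → Fin m → ℝ} {x : Fin m → ℝ}
    {c : ℝ} (hc : 0 ≤ c) (hF : HasDerivAt (fun h : ℝ => F (x + h • f x)) (c • F x) 0) :
    dini (fun y => ‖F y‖) f x = c * ‖F x‖ := by
  have h0 : F (x + (0 : ℝ) • f x) = F x := by rw [zero_smul, add_zero]
  rw [← h0] at hF ⊢
  have := tendsto_norm_slope_of_hasDerivAt_smul hc hF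
  rw [h0] at this ⊢
  exact this.limsup_eq

theorem stmt14_general {n ν : ℕ} (A : Matrix (Fin n) (Fin ν) ℕ)
    (Γ : Matrix (Fin n) (Fin ν) ℝ)
    (hAG : ∃ v : Fin ν → ℝ, (∀ j, 0 < v j) ∧ Γ.mulVec v = 0)
    (P : Finset (Fin n)) (hPne : P.Nonempty)
    (hdeadlock : ∀ j : Fin ν, ∃ i ∈ P, 0 < A i j)
    (hcritical : ¬ ∃ lam : Fin n → ℝ, (∀ i, 0 ≤ lam i) ∧ lam ≠ 0 ∧
        (∀ i, lam i ≠ 0 → i ∈ P) ∧ Matrix.vecMul lam Γ = 0) :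
    ¬ ∃ (q : ℕ) (C : Matrix (Fin q) (Fin ν) ℝ),
        (∀ r : Fin ν → ℝ, C.mulVec r = 0 ↔ Γ.mulVec r = 0) ∧
        ∀ R, IsAdmissible A R → ∀ x : Fin n → ℝ, (∀ i, 0 ≤ x i) →
          dini (fun y => ‖C.mulVec (R y)‖) (fun y => Γ.mulVec (R y)) x ≤ 0 := by
  rintro ⟨q, C, hker, hlyap⟩
  obtain ⟨v, hv⟩ := exists_mulVec_pos_of_not_exists_vecMul_eq_zero Γ P hcritical
  obtain ⟨r, hr, hΓr⟩ := exists_pos_mulVec_pos hAG hv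
  obtain ⟨R, hR, hR1, c, hc, hRd⟩ := exists_isAdmissible_hasDerivAt_smul hdeadlock hr hΓr
  obtain ⟨i₀, hi₀⟩ := hPne
  have hCr : C *ᵥ r ≠ 0 := fun h => (hΓr i₀ hi₀).ne' (by rw [(hker r).1 h, Pi.zero_apply])
  have hCR : HasDerivAt (fun h : ℝ => C *ᵥ R (1 + h • Γ *ᵥ R 1)) (c • C *ᵥ R 1) 0 := by
    rw [hR1, ← mulVec_smul]
    exact (LinearMap.toContinuousLinearMap C.mulVecLin).hasFDerivAt.comp_hasDerivAt 0 hRd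
  have hdini := hlyap R hR 1 fun _ => zero_le_one
  rw [dini_norm_eq_of_hasDerivAt_smul hc.le hCR, hR1] at hdini
  exact hdini.not_gt (mul_pos hc (norm_pos_iff.2 hCr))

/-- Theorem 5.5, part 1 (convex ℓ∞ form): a network with a critical deadlock admits no
convex piecewise-linear-in-rates robust Lyapunov function `‖C R(x)‖_∞`. -/
theorem stmt14 {n ν : ℕ} (A B : Matrix (Fin n) (Fin ν) ℕ)
    (Γ : Matrix (Fin n) (Fin ν) ℝ)
    (hΓ : ∀ i j, Γ i j = (B i j : ℝ) - (A i j : ℝ))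
    (hAG : ∃ v : Fin ν → ℝ, (∀ j, 0 < v j) ∧ Γ.mulVec v = 0)
    (P : Finset (Fin n)) (hPne : P.Nonempty)
    (hdeadlock : ∀ j : Fin ν, ∃ i ∈ P, 0 < A i j)
    (hcritical : ¬ ∃ lam : Fin n → ℝ, (∀ i, 0 ≤ lam i) ∧ lam ≠ 0 ∧
        (∀ i, lam i ≠ 0 → i ∈ P) ∧ Matrix.vecMul lam Γ = 0) :
    ¬ ∃ (q : ℕ) (C : Matrix (Fin q) (Fin ν) ℝ),
        (∀ r : Fin ν → ℝ, C.mulVec r = 0 ↔ Γ.mulVec r = 0) ∧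
        ∀ R, IsAdmissible A R → ∀ x : Fin n → ℝ, (∀ i, 0 ≤ x i) →
          dini (fun y => ‖C.mulVec (R y)‖) (fun y => Γ.mulVec (R y)) x ≤ 0 :=
  stmt14_general A Γ hAG P hPne hdeadlock hcritical
end
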